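/- arXiv:2603.23741 — 2 statements merged into one kernel-verified Lean document; each statement's English description precedes it below -/
import Mathlib

section
/- Let (P, w, d) be weighted differential, let p ∈ P, and let a and a' be two distinct points each of which covers exactly p. Then the set of points whose set of lower covers is exactly {a, a'} is finite, and the sum of the weights of these points equals w(p). -/
/-- A finite lower set of a poset: a finite set closed downward. -/
def IsFinLowerSet {P : Type*} [PartialOrder P] (I : Set P) : Prop :=
  I.Finite ∧ ∀ ⦃q p : P⦄, q ≤ p → p ∈ I → q ∈ I

/-- The insertion points of a set `I`: the points not in `I` all of whose
strict lower bounds lie in `I` (the minimal elements of the complement). -/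
def insPts {P : Type*} [PartialOrder P] (I : Set P) : Set P :=
  {x | x ∉ I ∧ ∀ y : P, y < x → y ∈ I}

/-- The deletion points of a set `I`: its maximal elements. -/
def delPts {P : Type*} [PartialOrder P] (I : Set P) : Set P :=
  {x | x ∈ I ∧ ∀ y ∈ I, ¬ x < y}

/-- `(P, w, d)` is weighted differential: every principal lower set is finite,
all weights are positive, `d` is positive, and for every finite lower set `I`
the set of insertion points is finite and the total weight of insertion points
equals the total weight of deletion points plus `d`. -/
def WeightedDifferential {P : Type*} [PartialOrder P] (w : P → ℤ) (d : ℤ) : Prop :=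
  (∀ p : P, {q : P | q ≤ p}.Finite) ∧ (∀ p : P, 0 < w p) ∧ 0 < d ∧
    ∀ I : Set P, IsFinLowerSet I →
      (insPts I).Finite ∧ (∑ᶠ x ∈ insPts I, w x) = (∑ᶠ x ∈ delPts I, w x) + d

/-- `a` covers exactly `p`: the set of lower covers of `a` is precisely `{p}`. -/
def CoversExactly {P : Type*} [PartialOrder P] (a p : P) : Prop :=
  {x : P | x ⋖ a} = {p}

/-!
Since `a` and `a'` each cover exactly `p`, both have `Iic p` as strict lower set, so `Iic a`,
`Iic a'` and `Iic a ∪ Iic a'` arise from the finite lower set `Iic p` by inserting `a`, `a'` or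
both. Counted with multiplicity, the insertion points of `Iic a` and `Iic a'` are those of
`Iic a ∪ Iic a'` and of `Iic p`, minus the points above both `a` and `a'`, which are exactly the
points with lower covers `{a, a'}`. In the alternating sum of the four weighted differential
identities `d` cancels, and the deletion points `{a, a'}`, `{p}`, `{a}`, `{a'}` leave `w p`.
-/
open Set

section

variable {P : Type*} [PartialOrder P]

theorem IsStronglyCoatomic.of_finite_Iic (h : ∀ p : P, (Iic p).Finite) : IsStronglyCoatomic P :=
  letI := LocallyFiniteOrder.ofFiniteIcc fun _ b => (h b).subset Icc_subset_Iic_self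
  inferInstance

theorem Iio_eq_Iic_of_coversExactly [IsStronglyCoatomic P] {a p : P} (h : CoversExactly a p) :
    Iio a = Iic p := by
  have hcov : ∀ z, z ⋖ a ↔ z = p := fun z => Set.ext_iff.mp h z
  ext q
  constructor
  · intro hq
    obtain ⟨z, hqz, hz⟩ := exists_le_covBy_of_lt hq
    exact (hcov z).mp hz ▸ hqz
  · intro hq
    exact hq.trans_lt ((hcov p).mpr rfl).lt

theorem self_mem_insPts_Iio (a : P) : a ∈ insPts (Iio a) :=
  ⟨lt_irrefl a, fun _ => id⟩

theorem mem_insPts_of_lowerCovers_subset [IsStronglyCoatomic P] {I : Set P} {c : P}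
    (hI : IsLowerSet I) (hc : c ∉ I) (hcov : {x | x ⋖ c} ⊆ I) : c ∈ insPts I :=
  ⟨hc, fun _ hy =>
    let ⟨_, hyz, hz⟩ := exists_le_covBy_of_lt hy
    hI hyz (hcov hz)⟩

theorem covBy_of_mem_delPts_of_mem_insPts {I : Set P} {a c : P} (ha : a ∈ delPts I)
    (hc : c ∈ insPts I) (hac : a < c) : a ⋖ c :=
  ⟨hac, fun z haz hzc => ha.2 z (hc.2 z hzc) haz⟩

theorem delPts_Iic (a : P) : delPts (Iic a) = {a} := by
  ext x
  constructor
  · rintro ⟨hx, hmax⟩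
    exact hx.eq_of_not_lt (hmax a le_rfl)
  · rintro rfl
    exact ⟨le_rfl, fun y hy hlt => hlt.not_ge hy⟩

theorem delPts_Iic_union_Iic {a a' : P} (h : ¬ a < a') (h' : ¬ a' < a) :
    delPts (Iic a ∪ Iic a') = {a, a'} := by
  ext x
  constructor
  · rintro ⟨hx | hx, hmax⟩
    · exact Or.inl (hx.eq_of_not_lt (hmax a (Or.inl le_rfl)))
    · exact Or.inr (hx.eq_of_not_lt (hmax a' (Or.inr le_rfl)))
  · rintro (rfl | rfl)
    · exact ⟨Or.inl le_rfl, fun y hy hlt => hy.elim hlt.not_ge fun hy => h (hlt.trans_le hy)⟩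
    · exact ⟨Or.inr le_rfl, fun y hy hlt => hy.elim (fun hy => h' (hlt.trans_le hy)) hlt.not_ge⟩

theorem setOf_lowerCovers_eq_pair [IsStronglyCoatomic P] {a a' : P} (h : ¬ a < a')
    (h' : ¬ a' < a) :
    {c : P | {x : P | x ⋖ c} = {a, a'}} = insPts (Iic a ∪ Iic a') ∩ {x | a < x ∧ a' < x} := by
  have hdel := delPts_Iic_union_Iic h h'
  ext c
  constructor
  · intro hc
    have hcov : ∀ x, x ⋖ c ↔ x = a ∨ x = a' := fun x => Set.ext_iff.mp hc x
    have hac := (hcov a).mpr (Or.inl rfl)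
    have ha'c := (hcov a').mpr (Or.inr rfl)
    refine ⟨mem_insPts_of_lowerCovers_subset ((isLowerSet_Iic a).union (isLowerSet_Iic a'))
      ?_ ?_, hac.lt, ha'c.lt⟩
    · rintro (hc | hc)
      exacts [hac.lt.not_ge hc, ha'c.lt.not_ge hc]
    · intro x hx
      rcases (hcov x).mp hx with rfl | rfl
      exacts [Or.inl le_rfl, Or.inr le_rfl]
  · rintro ⟨hc, hac, ha'c⟩
    ext x
    constructor
    · intro hx
      rcases hc.2 x hx.lt with hxa | hxa'
      · exact Or.inl (hxa.eq_of_not_lt fun hlt => hx.2 hlt hac)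
      · exact Or.inr (hxa'.eq_of_not_lt fun hlt => hx.2 hlt ha'c)
    · rintro (rfl | rfl)
      · exact covBy_of_mem_delPts_of_mem_insPts (by simp [hdel]) hc hac
      · exact covBy_of_mem_delPts_of_mem_insPts (by simp [hdel]) hc ha'c

theorem insPts_insert_inter_insPts_insert {I : Set P} {a a' : P} (hne : a ≠ a') :
    insPts (insert a I) ∩ insPts (insert a' I) = insPts I \ {a, a'} := by
  ext x
  simp only [insPts, mem_inter_iff, mem_sdiff, mem_ofPred_eq, mem_insert_iff, mem_singleton_iff]
  grind

-- An insertion point of `insert a I ∪ insert a' I` lies in `insPts (insert a I)` unless it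
-- is above `a'`, and in `insPts (insert a' I)` unless it is above `a`.
theorem insPts_insert_union_insPts_insert {I : Set P} {a a' : P} (ha : a ∈ insPts I)
    (ha' : a' ∈ insPts I) (hne : a ≠ a') :
    insPts (insert a I) ∪ insPts (insert a' I) =
      insPts (insert a I ∪ insert a' I) \ {x | a < x ∧ a' < x} ∪ {a, a'} := by
  ext x
  simp only [insPts, mem_union, mem_sdiff, mem_ofPred_eq, mem_insert_iff,
    mem_singleton_iff] at *
  grind

theorem isFinLowerSet_Iic {p : P} (h : (Iic p).Finite) : IsFinLowerSet (Iic p) :=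
  ⟨h, fun _ _ hqr hr => hqr.trans hr⟩

theorem IsFinLowerSet.insert {I : Set P} {a : P} (hI : IsFinLowerSet I) (ha : a ∈ insPts I) :
    IsFinLowerSet (insert a I) := by
  refine ⟨hI.1.insert a, ?_⟩
  rintro q r hqr (rfl | hr)
  · rcases hqr.lt_or_eq with hlt | rfl
    exacts [Or.inr (ha.2 q hlt), Or.inl rfl]
  · exact Or.inr (hI.2 hqr hr)

theorem IsFinLowerSet.union {I J : Set P} (hI : IsFinLowerSet I) (hJ : IsFinLowerSet J) :
    IsFinLowerSet (I ∪ J) :=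
  ⟨hI.1.union hJ.1, fun _ _ hqr => Or.imp (hI.2 hqr) (hJ.2 hqr)⟩

theorem WeightedDifferential.finsum_insPts_inter_above_pair {w : P → ℤ} {d : ℤ}
    (h : WeightedDifferential w d) {I : Set P} (hI : IsFinLowerSet I) {a a' : P}
    (ha : a ∈ insPts I) (ha' : a' ∈ insPts I) (hne : a ≠ a') :
    (insPts (insert a I ∪ insert a' I) ∩ {x | a < x ∧ a' < x}).Finite ∧
      ∑ᶠ x ∈ insPts (insert a I ∪ insert a' I) ∩ {x | a < x ∧ a' < x}, w x =
        (∑ᶠ x ∈ delPts (insert a I ∪ insert a' I), w x) + (∑ᶠ x ∈ delPts I, w x) -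
          (∑ᶠ x ∈ delPts (insert a I), w x) - (∑ᶠ x ∈ delPts (insert a' I), w x) := by
  have hIa := hI.insert ha
  have hIa' := hI.insert ha'
  obtain ⟨hfin, hsum⟩ := h.2.2.2 I hI
  obtain ⟨hfina, hsuma⟩ := h.2.2.2 _ hIa
  obtain ⟨hfina', hsuma'⟩ := h.2.2.2 _ hIa'
  obtain ⟨hfinJ, hsumJ⟩ := h.2.2.2 _ (hIa.union hIa')
  have hpair : ({a, a'} : Set P) ⊆ insPts I := insert_subset ha (singleton_subset_iff.mpr ha')
  have hdisj : Disjoint (insPts (insert a I ∪ insert a' I) \ {x | a < x ∧ a' < x}) {a, a'} := by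
    refine disjoint_right.mpr ?_
    rintro x (rfl | rfl) hx
    exacts [hx.1.1 (Or.inl (Or.inl rfl)), hx.1.1 (Or.inr (Or.inl rfl))]
  have hunion := finsum_mem_union_inter (f := w) hfina hfina'
  rw [insPts_insert_union_insPts_insert ha ha' hne, insPts_insert_inter_insPts_insert hne,
    finsum_mem_union hdisj hfinJ.sdiff (toFinite _)] at hunion
  have hsplitJ := finsum_mem_inter_add_sdiff (f := w) {x | a < x ∧ a' < x} hfinJ
  have hsplitI := finsum_mem_add_sdiff (f := w) hpair hfin
  exact ⟨hfinJ.inter_of_left _, by linarith⟩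

end

/-- In a weighted differential poset, if `a` and `a'` are
distinct points each covering exactly `p`, then the set of points whose lower
covers are exactly `{a, a'}` is finite and their total weight equals `w p`. -/
theorem sum_covers_exactly_pair {P : Type*} [PartialOrder P]
    (w : P → ℤ) (d : ℤ) (h : WeightedDifferential w d)
    (p a a' : P) (hne : a ≠ a')
    (ha : CoversExactly a p) (ha' : CoversExactly a' p) :
    {c : P | {x : P | x ⋖ c} = {a, a'}}.Finite ∧
      (∑ᶠ c ∈ {c : P | {x : P | x ⋖ c} = {a, a'}}, w c) = w p := by
  have := IsStronglyCoatomic.of_finite_Iic h.1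
  have hIio := Iio_eq_Iic_of_coversExactly ha
  have hIio' := Iio_eq_Iic_of_coversExactly ha'
  have hinc : ¬ a < a' := fun hlt => lt_irrefl a (show a ∈ Iio a by rwa [hIio, ← hIio'])
  have hinc' : ¬ a' < a := fun hlt => lt_irrefl a' (show a' ∈ Iio a' by rwa [hIio', ← hIio])
  have hinsert : insert a (Iic p) = Iic a := by rw [← hIio, Iio_insert]
  have hinsert' : insert a' (Iic p) = Iic a' := by rw [← hIio', Iio_insert]
  obtain ⟨hfinite, hsum⟩ := h.finsum_insPts_inter_above_pair (isFinLowerSet_Iic (h.1 p))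
    (hIio ▸ self_mem_insPts_Iio a) (hIio' ▸ self_mem_insPts_Iio a') hne
  rw [hinsert, hinsert'] at hfinite hsum
  rw [delPts_Iic_union_Iic hinc hinc', delPts_Iic, delPts_Iic, delPts_Iic, finsum_mem_pair hne,
    finsum_mem_singleton, finsum_mem_singleton, finsum_mem_singleton] at hsum
  rw [setOf_lowerCovers_eq_pair hinc hinc']
  exact ⟨hfinite, by rw [hsum]; ring⟩
end

section
/- Let (P, w, d) be weighted differential, let p ∈ P, and let a₁, a₂, a₃ be three pairwise distinct points each of which covers exactly p. Then the set of points whose set of lower covers is exactly {a₁, a₂, a₃} is finite, and w(p) plus the sum of the weights of these points equals 0. -/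
open Finset

theorem Finset.sum_powerset_ite_subset_neg_one_pow_card_sdiff {α : Type*} [DecidableEq α]
    {A S : Finset α} (hAS : A ⊆ S) :
    ∑ T ∈ S.powerset, (if A ⊆ T then (-1 : ℤ) ^ #(S \ T) else 0) = if A = S then 1 else 0 := by
  rw [← sum_filter, ← Icc_eq_filter_powerset]
  calc ∑ T ∈ Icc A S, (-1 : ℤ) ^ #(S \ T) = ∑ R ∈ (S \ A).powerset, (-1 : ℤ) ^ #R :=
        sum_nbij' (S \ ·) (S \ ·) (fun _ _ => by grind) (fun _ _ => by grind)
          (fun _ _ => by grind) (fun _ _ => by grind) (fun _ _ => rfl)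
    _ = if A = S then 1 else 0 := by
      rw [sum_powerset_neg_one_pow_card]
      exact if_congr (sdiff_eq_empty_iff_subset.trans ⟨hAS.antisymm, fun h => h.ge⟩) rfl rfl

theorem Finset.sum_powerset_neg_one_pow_card_sdiff_of_nonempty {α : Type*} [DecidableEq α]
    {S : Finset α} (hS : S.Nonempty) :
    ∑ T ∈ S.powerset, (-1 : ℤ) ^ #(S \ T) = 0 := by
  simpa [eq_comm, hS.ne_empty] using sum_powerset_ite_subset_neg_one_pow_card_sdiff (empty_subset S)

theorem Finset.sum_powerset_neg_one_pow_card_sdiff_mul_sum {α : Type*} [DecidableEq α]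
    {S : Finset α} (hS : 1 < #S) (f : α → ℤ) :
    ∑ T ∈ S.powerset, (-1 : ℤ) ^ #(S \ T) * ∑ a ∈ T, f a = 0 := by
  calc ∑ T ∈ S.powerset, (-1 : ℤ) ^ #(S \ T) * ∑ a ∈ T, f a
      = ∑ T ∈ S.powerset, ∑ a ∈ S, if a ∈ T then (-1 : ℤ) ^ #(S \ T) * f a else 0 :=
        sum_congr rfl fun T hT => by
          rw [sum_ite_mem, inter_eq_right.2 (mem_powerset.1 hT), mul_sum]
    _ = ∑ a ∈ S, f a * ∑ T ∈ S.powerset, (if {a} ⊆ T then (-1 : ℤ) ^ #(S \ T) else 0) := by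
      rw [sum_comm]
      simp only [mul_sum, singleton_subset_iff, mul_ite, mul_zero, mul_comm]
    _ = 0 := sum_eq_zero fun a ha => by
        rw [sum_powerset_ite_subset_neg_one_pow_card_sdiff (singleton_subset_iff.2 ha),
          if_neg (fun h => by simp [← h] at hS), mul_zero]

section Covers

variable {P : Type*} [PartialOrder P]

def lowerCovers (c : P) : Set P := {x | x ⋖ c}

def coversIn (S : Set P) : Set P := {c | (lowerCovers c).Nonempty ∧ lowerCovers c ⊆ S}

theorem coversIn_empty : coversIn (∅ : Set P) = ∅ :=
  Set.eq_empty_of_forall_notMem fun _ ⟨hne, hsub⟩ => Set.not_nonempty_empty (hne.mono hsub)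

theorem exists_le_covBy_of_lt_of_finite {a b : P} (hfin : {x | x ≤ b}.Finite) (hab : a < b) :
    ∃ x, a ≤ x ∧ x ⋖ b := by
  obtain ⟨x, ⟨hax, hxb⟩, hmax⟩ :=
    (hfin.subset fun x hx => le_of_lt hx.2 : {x | a ≤ x ∧ x < b}.Finite).exists_maximal
      ⟨a, le_rfl, hab⟩
  exact ⟨x, hax, hxb, fun c hxc hcb => hxc.not_ge (hmax ⟨hax.trans hxc.le, hcb⟩ hxc.le)⟩

theorem CoversExactly.covBy {a p : P} (h : CoversExactly a p) : p ⋖ a :=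
  (Set.ext_iff.1 h p).2 rfl

theorem CoversExactly.le_of_lt {a p y : P} (h : CoversExactly a p) (hfin : {x | x ≤ a}.Finite)
    (hy : y < a) : y ≤ p := by
  obtain ⟨z, hyz, hza⟩ := exists_le_covBy_of_lt_of_finite hfin hy
  exact hyz.trans_eq ((Set.ext_iff.1 h z).1 hza)

theorem delPts_Iic_s8 (p : P) : delPts (Set.Iic p) = {p} :=
  Set.ext fun x => ⟨fun ⟨hxp, hmax⟩ => (hxp : x ≤ p).eq_or_lt.resolve_right (hmax p le_rfl),
    fun hx => ⟨(hx : x = p).le, fun _ hy hxy => (hx ▸ hxy).not_ge hy⟩⟩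

section CoversExactly

variable {p : P} {S : Set P}

theorem isFinLowerSet_Iic_union (hfin : ∀ q : P, {x | x ≤ q}.Finite) (hS : S.Finite)
    (hcov : ∀ a ∈ S, CoversExactly a p) : IsFinLowerSet (Set.Iic p ∪ S) := by
  refine ⟨(hfin p).union hS, ?_⟩
  rintro q r hqr (hr | hr)
  · exact Or.inl (hqr.trans hr)
  · obtain hqr | rfl := hqr.lt_or_eq
    · exact Or.inl ((hcov r hr).le_of_lt (hfin r) hqr)
    · exact Or.inr hr

theorem delPts_Iic_union (hfin : ∀ q : P, {x | x ≤ q}.Finite) (hne : S.Nonempty)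
    (hcov : ∀ a ∈ S, CoversExactly a p) : delPts (Set.Iic p ∪ S) = S := by
  have hp : ∀ a ∈ S, ∀ y, y < a → y ≤ p := fun a ha _ => (hcov a ha).le_of_lt (hfin a)
  ext x
  constructor
  · rintro ⟨hx | hx, hmax⟩
    · obtain ⟨a, ha⟩ := hne
      exact absurd ((hx : x ≤ p).trans_lt (hcov a ha).covBy.lt) (hmax a (Or.inr ha))
    · exact hx
  · refine fun hx => ⟨Or.inr hx, ?_⟩
    rintro y (hy | hy) hxy
    · exact (hcov x hx).covBy.lt.not_ge (hxy.le.trans hy)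
    · exact (hcov x hx).covBy.lt.not_ge (hp y hy x hxy)

theorem subset_insPts_Iic (hfin : ∀ q : P, {x | x ≤ q}.Finite)
    (hcov : ∀ a ∈ S, CoversExactly a p) : S ⊆ insPts (Set.Iic p) :=
  fun a ha => ⟨(hcov a ha).covBy.lt.not_ge, fun _ => (hcov a ha).le_of_lt (hfin a)⟩

theorem disjoint_insPts_Iic_coversIn (hcov : ∀ a ∈ S, CoversExactly a p) :
    Disjoint (insPts (Set.Iic p)) (coversIn S) :=
  Set.disjoint_left.2 fun _ ⟨_, hlow⟩ ⟨⟨z, hz⟩, hsub⟩ =>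
    (hcov z (hsub hz)).covBy.lt.not_ge (hlow z hz.lt)

theorem insPts_Iic_union (hfin : ∀ q : P, {x | x ≤ q}.Finite)
    (hcov : ∀ a ∈ S, CoversExactly a p) :
    insPts (Set.Iic p ∪ S) = (insPts (Set.Iic p) \ S) ∪ coversIn S := by
  have hp : ∀ a ∈ S, ∀ y, y < a → y ≤ p := fun a ha _ => (hcov a ha).le_of_lt (hfin a)
  have hpS : ∀ a ∈ S, ¬ a ≤ p := fun a ha => (hcov a ha).covBy.lt.not_ge
  ext x
  constructor
  · rintro ⟨hxJ, hlow⟩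
    by_cases hS : ∃ a ∈ S, a < x
    · obtain ⟨a, ha, hax⟩ := hS
      obtain ⟨z, -, hzx⟩ := exists_le_covBy_of_lt_of_finite (hfin x) hax
      refine Or.inr ⟨⟨z, hzx⟩, fun y hy => (hlow y hy.lt).resolve_left fun hyp => ?_⟩
      exact hy.2 ((hyp : y ≤ p).trans_lt (hcov a ha).covBy.lt) hax
    · push Not at hS
      exact Or.inl ⟨⟨fun h => hxJ (Or.inl h),
        fun y hy => (hlow y hy).resolve_right fun hyS => hS y hyS hy⟩, fun h => hxJ (Or.inr h)⟩
  · rintro (⟨⟨hxp, hlow⟩, hxS⟩ | ⟨⟨z, hz⟩, hsub⟩)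
    · exact ⟨fun h => h.elim hxp hxS, fun y hy => Or.inl (hlow y hy)⟩
    · refine ⟨?_, fun y hy => ?_⟩
      · rintro (hxp | hxS)
        · exact hpS z (hsub hz) (hz.lt.le.trans hxp)
        · exact hpS z (hsub hz) (hp x hxS z hz.lt)
      · obtain ⟨z', hyz', hz'⟩ := exists_le_covBy_of_lt_of_finite (hfin x) hy
        obtain hyz' | rfl := hyz'.lt_or_eq
        · exact Or.inl (hp z' (hsub hz') y hyz')
        · exact Or.inr (hsub hz')

theorem WeightedDifferential.finsum_coversIn {w : P → ℤ} {d : ℤ} (h : WeightedDifferential w d)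
    (hS : S.Finite) (hne : S.Nonempty) (hcov : ∀ a ∈ S, CoversExactly a p) :
    (coversIn S).Finite ∧ ∑ᶠ c ∈ coversIn S, w c = 2 * ∑ᶠ a ∈ S, w a - w p := by
  obtain ⟨hfin, -, -, hwd⟩ := h
  obtain ⟨hinsI, hI⟩ := hwd (Set.Iic p) ⟨hfin p, fun _ _ hqr hr => hqr.trans hr⟩
  obtain ⟨hinsJ, hJ⟩ := hwd _ (isFinLowerSet_Iic_union hfin hS hcov)
  rw [delPts_Iic_s8, finsum_mem_singleton] at hI
  rw [delPts_Iic_union hfin hne hcov, insPts_Iic_union hfin hcov] at hJ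
  rw [insPts_Iic_union hfin hcov] at hinsJ
  have hU : (coversIn S).Finite := hinsJ.subset Set.subset_union_right
  have hdisj := (disjoint_insPts_Iic_coversIn hcov).mono_left (Set.sdiff_subset (t := S))
  have hsplit : ∑ᶠ x ∈ insPts (Set.Iic p), w x
      = ∑ᶠ x ∈ insPts (Set.Iic p) \ S, w x + ∑ᶠ x ∈ S, w x := by
    rw [← finsum_mem_union Set.disjoint_sdiff_left (hinsI.subset Set.sdiff_subset) hS,
      Set.sdiff_union_of_subset (subset_insPts_Iic hfin hcov)]
  rw [finsum_mem_union hdisj (hinsI.subset Set.sdiff_subset) hU] at hJ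
  exact ⟨hU, by linarith⟩

end CoversExactly

theorem finsum_lowerCovers_eq_sum_powerset [DecidableEq P] (w : P → ℤ) {S : Finset P}
    (hS : S.Nonempty) (hfin : (coversIn (S : Set P)).Finite) :
    ∑ᶠ c ∈ {c | lowerCovers c = S}, w c
      = ∑ T ∈ S.powerset, (-1) ^ #(S \ T) * ∑ᶠ c ∈ coversIn (T : Set P), w c := by
  classical
  set F := hfin.toFinset
  set A : P → Finset P := fun c => S.filter (· ∈ lowerCovers c)
  have hA : ∀ c ∈ F, lowerCovers c = A c := fun c hc => by
    ext x
    simp only [A, coe_filter]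
    exact ⟨fun hx => ⟨(hfin.mem_toFinset.1 hc).2 hx, hx⟩, And.right⟩
  have hT : ∀ T ∈ S.powerset,
      ∑ᶠ c ∈ coversIn (T : Set P), w c = ∑ c ∈ F, if A c ⊆ T then w c else 0 := by
    intro T hT
    suffices h : coversIn (T : Set P) = ↑(F.filter fun c => A c ⊆ T) by
      rw [h, finsum_mem_coe_finset, sum_filter]
    ext c
    simp only [coe_filter]
    constructor
    · rintro ⟨hne, hsub⟩
      have hcF : c ∈ F :=
        hfin.mem_toFinset.2 ⟨hne, hsub.trans (coe_subset.2 (mem_powerset.1 hT))⟩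
      exact ⟨hcF, by rw [← coe_subset, ← hA c hcF]; exact hsub⟩
    · rintro ⟨hcF, hAT⟩
      exact ⟨(hfin.mem_toFinset.1 hcF).1, by rw [hA c hcF]; exact coe_subset.2 hAT⟩
  have hV : ∑ᶠ c ∈ {c | lowerCovers c = S}, w c = ∑ c ∈ F, if A c = S then w c else 0 := by
    suffices h : {c | lowerCovers c = (S : Set P)} = ↑(F.filter fun c => A c = S) by
      rw [h, finsum_mem_coe_finset, sum_filter]
    ext c
    simp only [coe_filter]
    constructor
    · intro hc
      have hcF : c ∈ F := hfin.mem_toFinset.2 ⟨hc ▸ hS.to_set, hc.le⟩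
      exact ⟨hcF, by rw [← coe_inj, ← hA c hcF, hc]⟩
    · rintro ⟨hcF, hAS⟩
      exact (hA c hcF).trans (congrArg _ hAS)
  calc ∑ᶠ c ∈ {c | lowerCovers c = S}, w c
      = ∑ c ∈ F, w c * ∑ T ∈ S.powerset, (if A c ⊆ T then (-1 : ℤ) ^ #(S \ T) else 0) := by
        rw [hV]
        refine sum_congr rfl fun c hc => ?_
        rw [sum_powerset_ite_subset_neg_one_pow_card_sdiff (filter_subset _ _), mul_boole]
    _ = ∑ T ∈ S.powerset, (-1) ^ #(S \ T) * ∑ c ∈ F, if A c ⊆ T then w c else 0 := by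
        simp only [mul_sum, mul_ite, mul_zero]
        rw [sum_comm]
        simp only [mul_comm]
    _ = _ := sum_congr rfl fun T hT' => by rw [hT T hT']

theorem WeightedDifferential.finsum_lowerCovers_eq_neg_one_pow {w : P → ℤ} {d : ℤ}
    (h : WeightedDifferential w d) {p : P} {S : Finset P} (hS : 1 < #S)
    (hcov : ∀ a ∈ S, CoversExactly a p) :
    {c | lowerCovers c = (S : Set P)}.Finite ∧
      ∑ᶠ c ∈ {c | lowerCovers c = (S : Set P)}, w c = (-1) ^ #S * w p := by
  classical
  have hne : S.Nonempty := card_pos.1 (by omega)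
  obtain ⟨hfin, -⟩ := h.finsum_coversIn S.finite_toSet hne.to_set hcov
  have hcoversIn : ∀ T ∈ S.powerset, ∑ᶠ c ∈ coversIn (T : Set P), w c
      = 2 * ∑ a ∈ T, w a - w p + if T = ∅ then w p else 0 := by
    intro T hT
    obtain rfl | hT' := T.eq_empty_or_nonempty
    · simp [coversIn_empty]
    · have hcovT : ∀ a ∈ (T : Set P), CoversExactly a p := fun a ha => hcov a (mem_powerset.1 hT ha)
      rw [(h.finsum_coversIn T.finite_toSet hT'.to_set hcovT).2, finsum_mem_coe_finset,
        if_neg hT'.ne_empty, add_zero]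
  refine ⟨hfin.subset fun c hc => ⟨(hc : lowerCovers c = S) ▸ hne.to_set, hc.le⟩, ?_⟩
  rw [finsum_lowerCovers_eq_sum_powerset w hne hfin, sum_congr rfl fun T hT => by
    rw [hcoversIn T hT]]
  have hlin := sum_powerset_neg_one_pow_card_sdiff_mul_sum hS w
  have hconst := sum_powerset_neg_one_pow_card_sdiff_of_nonempty hne
  simp only [mul_add, mul_sub, sum_add_distrib, sum_sub_distrib, mul_ite, mul_zero, sum_ite_eq',
    empty_mem_powerset, if_true, sdiff_empty, ← sum_mul, mul_left_comm _ (2 : ℤ), ← mul_sum, hlin,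
    hconst]
  ring

end Covers

/-- In a weighted differential poset, if `a₁, a₂, a₃` are
pairwise distinct points each covering exactly `p`, then the set of points
whose lower covers are exactly `{a₁, a₂, a₃}` is finite and `w p` plus their
total weight equals `0`. -/
theorem sum_covers_exactly_triple {P : Type*} [PartialOrder P]
    (w : P → ℤ) (d : ℤ) (h : WeightedDifferential w d)
    (p a₁ a₂ a₃ : P) (h12 : a₁ ≠ a₂) (h13 : a₁ ≠ a₃) (h23 : a₂ ≠ a₃)
    (ha₁ : CoversExactly a₁ p) (ha₂ : CoversExactly a₂ p)
    (ha₃ : CoversExactly a₃ p) :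
    {c : P | {x : P | x ⋖ c} = {a₁, a₂, a₃}}.Finite ∧
      w p + (∑ᶠ c ∈ {c : P | {x : P | x ⋖ c} = {a₁, a₂, a₃}}, w c) = 0 := by
  classical
  have hcard : #({a₁, a₂, a₃} : Finset P) = 3 := card_eq_three.2 ⟨a₁, a₂, a₃, h12, h13, h23, rfl⟩
  have hcov : ∀ a ∈ ({a₁, a₂, a₃} : Finset P), CoversExactly a p := by
    simp only [mem_insert, mem_singleton]
    rintro a (rfl | rfl | rfl) <;> assumption
  obtain ⟨hfin, hsum⟩ := h.finsum_lowerCovers_eq_neg_one_pow (by omega) hcov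
  simp only [hcard, coe_insert, coe_singleton, lowerCovers] at hfin hsum
  exact ⟨hfin, by linarith⟩
end
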